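/- Let d ≥ 2 be an integer, L ∈ ℕ, u ∈ H_{d,L}, p ∈ [1,∞], and N ∈ ℕ₀. Then ‖u‖_{L^p(I_L^{d−1} × {N})} ≤ ‖u‖_{L^p(I_L^{d−1} × {0})}; i.e. for every p the L^p norm of a bounded periodic discrete harmonic function on the half space at height N is at most its L^p norm on the bottom layer. -/

import Mathlib

/-!
Harmonicity writes `u (x, y + 1)` as the mean of its `2d` lattice neighbours, so by convexity of
`t ↦ |t| ^ p`, `2d |u (x, y + 1)| ^ p` is at most the sum of `|u| ^ p` over those neighbours.
Sum this over the cube: since sums of `2L`-periodic functions over `I_L^{d-1}` are translation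
invariant, the `2(d - 1)` horizontal neighbours each contribute the layer sum
`S (y + 1) = ∑ₓ |u (x, y + 1)| ^ p`, whence `2 S (y + 1) ≤ S y + S (y + 2)`; the layer maximum
satisfies the same inequality. A bounded convex sequence is nonincreasing.
-/

/-- The cube `I_L^m = {-L+1,…,L}^m` of lattice points. -/
noncomputable def ILpi (m L : ℕ) : Finset (Fin m → ℤ) :=
  Finset.Icc (fun _ => -(L:ℤ) + 1) (fun _ => (L:ℤ))

/-- `u` belongs to `H_{d,L,≥0}`: bounded, `2L`-periodic in the first `d-1`
coordinates, and discrete harmonic at every point of `ℤ^{d-1} × ℕ`. -/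
def HalfHarm (d L : ℕ) (u : (Fin (d-1) → ℤ) → ℕ → ℝ) : Prop :=
  (∃ B : ℝ, ∀ x y, |u x y| ≤ B) ∧
  (∀ x y i, u (x + (2*L) • Pi.single i 1) y = u x y) ∧
  (∀ x y, (∑ i, (u (x + Pi.single i 1) (y+1) + u (x - Pi.single i 1) (y+1)))
      + u x (y+2) + u x y = 2 * d * u x (y+1))

open Finset Function

theorem Function.Periodic.eq_of_forall_modEq {ι α : Type*} [Fintype ι] [DecidableEq ι] {n : ℕ}
    {f : (ι → ℤ) → α} (hf : ∀ i, Periodic f (n • Pi.single i 1)) {x y : ι → ℤ}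
    (hxy : ∀ j, x j ≡ y j [ZMOD n]) : f x = f y := by
  have hsum : y = x + ∑ j, ((y j - x j) / n) • (n • Pi.single j (1 : ℤ)) := by
    ext j
    simp [Finset.sum_apply, Pi.single_apply, Int.ediv_mul_cancel (hxy j).dvd]
  have hper : Periodic f (∑ j, ((y j - x j) / n) • (n • Pi.single j (1 : ℤ))) :=
    sum_induction _ (Periodic f) (fun _ _ => Periodic.add_period)
      (periodic_with_period_zero f) fun j _ => (hf j).zsmul _
  rw [hsum, hper]

lemma mem_ILpi {m L : ℕ} {x : Fin m → ℤ} : x ∈ ILpi m L ↔ ∀ j, -(L : ℤ) + 1 ≤ x j ∧ x j ≤ L := by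
  simp [ILpi, Pi.le_def, forall_and]

lemma eq_of_forall_modEq_of_mem_ILpi {m L : ℕ} {x y : Fin m → ℤ} (hx : x ∈ ILpi m L)
    (hy : y ∈ ILpi m L) (hxy : ∀ j, x j ≡ y j [ZMOD (2 * L : ℕ)]) : x = y := by
  ext j
  have hx := mem_ILpi.1 hx j
  have hy := mem_ILpi.1 hy j
  have := Int.eq_zero_of_abs_lt_dvd (hxy j).dvd (by push_cast; rw [abs_lt]; omega)
  omega

def cubeRep (L : ℕ) {m : ℕ} (x : Fin m → ℤ) : Fin m → ℤ :=
  fun j => (x j + (L - 1)) % (2 * L : ℕ) - (L - 1)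

lemma cubeRep_mem_ILpi {m L : ℕ} (hL : 1 ≤ L) (x : Fin m → ℤ) : cubeRep L x ∈ ILpi m L := by
  refine mem_ILpi.2 fun j => ?_
  have h0 : (0 : ℤ) < (2 * L : ℕ) := by omega
  have := Int.emod_nonneg (x j + (L - 1)) h0.ne'
  have := Int.emod_lt_of_pos (x j + (L - 1)) h0
  simp only [cubeRep]
  omega

lemma cubeRep_modEq (L : ℕ) {m : ℕ} (x : Fin m → ℤ) (j : Fin m) :
    cubeRep L x j ≡ x j [ZMOD (2 * L : ℕ)] := by
  simpa [cubeRep] using (Int.mod_modEq (x j + (L - 1)) (2 * L : ℕ)).sub_right (L - 1 : ℤ)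

lemma cubeRep_add_sub {m L : ℕ} {x : Fin m → ℤ} (hL : 1 ≤ L) (hx : x ∈ ILpi m L)
    (c : Fin m → ℤ) : cubeRep L (cubeRep L (x + c) - c) = x :=
  eq_of_forall_modEq_of_mem_ILpi (cubeRep_mem_ILpi hL _) hx fun j =>
    (cubeRep_modEq L _ j).trans <| by
      simpa using (cubeRep_modEq L (x + c) j).sub_right (c j)

theorem sum_ILpi_comp_add {m L : ℕ} {β : Type*} [AddCommMonoid β] (hL : 1 ≤ L)
    {f : (Fin m → ℤ) → β} (hf : ∀ i, Periodic f ((2 * L) • Pi.single i 1)) (c : Fin m → ℤ) :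
    ∑ x ∈ ILpi m L, f (x + c) = ∑ x ∈ ILpi m L, f x := by
  refine sum_nbij' (fun x => cubeRep L (x + c)) (fun x => cubeRep L (x - c))
    (fun x _ => cubeRep_mem_ILpi hL _) (fun x _ => cubeRep_mem_ILpi hL _)
    (fun x hx => cubeRep_add_sub hL hx c) (fun x hx => ?_)
    (fun x _ => Periodic.eq_of_forall_modEq hf fun j => (cubeRep_modEq L _ j).symm)
  simpa [sub_eq_add_neg] using cubeRep_add_sub hL hx (-c)

lemma Real.le_biSup_of_mem_finset {ι : Type*} (s : Finset ι) (f : ι → ℝ) {z : ι} (hz : z ∈ s) :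
    f z ≤ ⨆ x ∈ s, f x := by
  -- off `s` the inner supremum is `sSup ∅ = 0`, so `∑ x ∈ s, |f x|` bounds every term
  have hbdd : BddAbove (Set.range fun x => ⨆ _ : x ∈ s, f x) :=
    ⟨∑ x ∈ s, |f x|, Set.forall_mem_range.2 fun x =>
      Real.iSup_le
        (fun hx => (le_abs_self _).trans
          (single_le_sum (f := fun x => |f x|) (fun _ _ => abs_nonneg _) hx))
        (sum_nonneg fun _ _ => abs_nonneg _)⟩
  exact le_ciSup_of_le hbdd z (ciSup_pos (f := fun _ => f z) hz).ge

theorem le_biSup_ILpi {m L : ℕ} (hL : 1 ≤ L) {f : (Fin m → ℤ) → ℝ}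
    (hf : ∀ i, Periodic f ((2 * L) • Pi.single i 1)) (x : Fin m → ℤ) :
    f x ≤ ⨆ z ∈ ILpi m L, f z :=
  (Periodic.eq_of_forall_modEq hf fun j => (cubeRep_modEq L x j).symm).trans_le
    (Real.le_biSup_of_mem_finset (ILpi m L) f (cubeRep_mem_ILpi hL x))

theorem antitone_of_two_mul_le_add_of_bddAbove {a : ℕ → ℝ} (hbdd : BddAbove (Set.range a))
    (hconv : ∀ n, 2 * a (n + 1) ≤ a n + a (n + 2)) : Antitone a := by
  have hmono : Monotone fun n => a (n + 1) - a n :=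
    monotone_nat_of_le_succ fun n => by linarith [hconv n]
  -- the increments increase, so a single positive increment forces linear growth
  refine antitone_nat_of_succ_le fun n => not_lt.1 fun hpos => ?_
  have hgrow (k : ℕ) : k * (a (n + 1) - a n) ≤ a (n + k) - a n := by
    have := card_nsmul_le_sum (range k) (fun i => a (n + (i + 1)) - a (n + i)) _
      fun i _ => hmono (Nat.le_add_right n i)
    rwa [sum_range_sub (fun i => a (n + i)), card_range, nsmul_eq_mul, add_zero] at this
  obtain ⟨C, hC⟩ := hbdd
  obtain ⟨k, hk⟩ := exists_nat_gt ((C - a n) / (a (n + 1) - a n))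
  rw [div_lt_iff₀ (sub_pos.2 hpos)] at hk
  linarith [hgrow k, hC ⟨n + k, rfl⟩]

theorem card_mul_abs_rpow_le_sum {ι : Type*} [Fintype ι] {t : ι → ℝ} {v p : ℝ} (hp : 1 ≤ p)
    (hv : Fintype.card ι * v = ∑ k, t k) :
    Fintype.card ι * |v| ^ p ≤ ∑ k, |t k| ^ p := by
  set n : ℝ := (Fintype.card ι : ℝ) with hn_def
  rcases (Nat.cast_nonneg _ : (0:ℝ) ≤ n).eq_or_lt with hn | hn
  · rw [hn_def, ← hn, zero_mul]; positivity
  have key : n ^ (p - 1) * (n * |v| ^ p) ≤ n ^ (p - 1) * ∑ k, |t k| ^ p :=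
    calc n ^ (p - 1) * (n * |v| ^ p) = |∑ k, t k| ^ p := by
          rw [← hv, abs_mul, abs_of_pos hn, Real.mul_rpow hn.le (abs_nonneg v), ← mul_assoc,
            ← Real.rpow_add_one hn.ne']
          ring_nf
      _ ≤ (∑ k, |t k|) ^ p := by gcongr; exact abs_sum_le_sum_abs _ _
      _ ≤ n ^ (p - 1) * ∑ k, |t k| ^ p := by
          simpa using Real.rpow_sum_le_const_mul_sum_rpow univ t hp
  exact le_of_mul_le_mul_left key (by positivity)

def neighbourValues {m : ℕ} (u : (Fin m → ℤ) → ℕ → ℝ) (x : Fin m → ℤ) (y : ℕ) :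
    (Fin m ⊕ Fin m) ⊕ Bool → ℝ
  | .inl (.inl i) => u (x + Pi.single i 1) (y + 1)
  | .inl (.inr i) => u (x - Pi.single i 1) (y + 1)
  | .inr true => u x (y + 2)
  | .inr false => u x y

lemma sum_comp_neighbourValues {m : ℕ} (g : ℝ → ℝ) (u : (Fin m → ℤ) → ℕ → ℝ)
    (x : Fin m → ℤ) (y : ℕ) :
    ∑ k, g (neighbourValues u x y k) =
      ∑ i, (g (u (x + Pi.single i 1) (y + 1)) + g (u (x - Pi.single i 1) (y + 1)))
        + g (u x (y + 2)) + g (u x y) := by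
  simp [neighbourValues, Fintype.sum_sum_type, sum_add_distrib]
  ring

noncomputable def layerPowSum {m : ℕ} (L : ℕ) (u : (Fin m → ℤ) → ℕ → ℝ) (p : ℝ) (y : ℕ) : ℝ :=
  ∑ x ∈ ILpi m L, |u x y| ^ p

noncomputable def layerSup {m : ℕ} (L : ℕ) (u : (Fin m → ℤ) → ℕ → ℝ) (y : ℕ) : ℝ :=
  ⨆ x ∈ ILpi m L, |u x y|

lemma layerSup_le {m L : ℕ} {u : (Fin m → ℤ) → ℕ → ℝ} {y : ℕ} {a : ℝ}
    (h : ∀ x, |u x y| ≤ a) (ha : 0 ≤ a) : layerSup L u y ≤ a :=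
  Real.iSup_le (fun x => Real.iSup_le (fun _ => h x) ha) ha

lemma layerSup_nonneg {m : ℕ} (L : ℕ) (u : (Fin m → ℤ) → ℕ → ℝ) (y : ℕ) : 0 ≤ layerSup L u y :=
  Real.iSup_nonneg fun _ => Real.iSup_nonneg fun _ => abs_nonneg _

namespace HalfHarm

variable {d L : ℕ} {u : (Fin (d - 1) → ℤ) → ℕ → ℝ}

lemma periodic_comp {β : Type*} (hu : HalfHarm d L u) (g : ℝ → β) (y : ℕ) (i : Fin (d - 1)) :
    Periodic (fun x => g (u x y)) ((2 * L) • Pi.single i 1) :=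
  fun x => congrArg g (hu.2.1 x y i)

theorem mul_abs_rpow_le_sum (hd : 1 ≤ d) (hu : HalfHarm d L u) {p : ℝ} (hp : 1 ≤ p)
    (x : Fin (d - 1) → ℤ) (y : ℕ) :
    2 * d * |u x (y + 1)| ^ p ≤
      ∑ i, (|u (x + Pi.single i 1) (y + 1)| ^ p + |u (x - Pi.single i 1) (y + 1)| ^ p)
        + |u x (y + 2)| ^ p + |u x y| ^ p := by
  have hcard : (Fintype.card ((Fin (d - 1) ⊕ Fin (d - 1)) ⊕ Bool) : ℝ) = 2 * d := by
    simp only [Fintype.card_sum, Fintype.card_fin, Fintype.card_bool]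
    push_cast [Nat.cast_sub hd]
    ring
  have hmean := sum_comp_neighbourValues id u x y
  simp only [id] at hmean
  have := card_mul_abs_rpow_le_sum (t := neighbourValues u x y) (v := u x (y + 1)) hp
    (by rw [hcard, hmean, hu.2.2 x y])
  rwa [hcard, sum_comp_neighbourValues (fun t => |t| ^ p)] at this

theorem two_mul_layerPowSum_le (hd : 1 ≤ d) (hL : 1 ≤ L) (hu : HalfHarm d L u) {p : ℝ}
    (hp : 1 ≤ p) (y : ℕ) :
    2 * layerPowSum L u p (y + 1) ≤ layerPowSum L u p y + layerPowSum L u p (y + 2) := by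
  have hshift (c : Fin (d - 1) → ℤ) :
      ∑ x ∈ ILpi (d - 1) L, |u (x + c) (y + 1)| ^ p = layerPowSum L u p (y + 1) :=
    sum_ILpi_comp_add hL (hu.periodic_comp (fun t => |t| ^ p) (y + 1)) c
  have hd_cast : ((d - 1 : ℕ) : ℝ) = d - 1 := by push_cast [Nat.cast_sub hd]; ring
  have hplus : ∑ x ∈ ILpi (d - 1) L, ∑ i, |u (x + Pi.single i 1) (y + 1)| ^ p
      = (d - 1) * layerPowSum L u p (y + 1) := by
    rw [sum_comm]; simp [hshift, hd_cast]
  have hminus : ∑ x ∈ ILpi (d - 1) L, ∑ i, |u (x - Pi.single i 1) (y + 1)| ^ p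
      = (d - 1) * layerPowSum L u p (y + 1) := by
    rw [sum_comm]; simp [sub_eq_add_neg, hshift, hd_cast]
  have := calc
    2 * d * layerPowSum L u p (y + 1) = ∑ x ∈ ILpi (d - 1) L, 2 * d * |u x (y + 1)| ^ p :=
        mul_sum _ _ _
    _ ≤ ∑ x ∈ ILpi (d - 1) L, (∑ i, (|u (x + Pi.single i 1) (y + 1)| ^ p
          + |u (x - Pi.single i 1) (y + 1)| ^ p) + |u x (y + 2)| ^ p + |u x y| ^ p) :=
        sum_le_sum fun x _ => hu.mul_abs_rpow_le_sum hd hp x y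
    _ = 2 * (d - 1) * layerPowSum L u p (y + 1) + layerPowSum L u p (y + 2)
          + layerPowSum L u p y := by
        simp only [sum_add_distrib, hplus, hminus]
        unfold layerPowSum
        ring
  linarith

theorem two_mul_layerSup_le (hd : 1 ≤ d) (hL : 1 ≤ L) (hu : HalfHarm d L u) (y : ℕ) :
    2 * layerSup L u (y + 1) ≤ layerSup L u y + layerSup L u (y + 2) := by
  have hle (y' : ℕ) (x : Fin (d - 1) → ℤ) : |u x y'| ≤ layerSup L u y' :=
    le_biSup_ILpi hL (hu.periodic_comp abs y') x
  have hd_pos : (0 : ℝ) < 2 * d := by positivity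
  set R := (2 * (d - 1) * layerSup L u (y + 1) + layerSup L u (y + 2) + layerSup L u y) / (2 * d)
  have hR : 0 ≤ R := by
    have : (1 : ℝ) ≤ d := by exact_mod_cast hd
    have := layerSup_nonneg L u (y + 1)
    have := layerSup_nonneg L u (y + 2)
    have := layerSup_nonneg L u y
    positivity
  have hpt (x : Fin (d - 1) → ℤ) : |u x (y + 1)| ≤ R := by
    rw [le_div_iff₀ hd_pos]
    have := hu.mul_abs_rpow_le_sum hd le_rfl x y
    simp only [Real.rpow_one] at this
    calc |u x (y + 1)| * (2 * d)
        ≤ ∑ i, (|u (x + Pi.single i 1) (y + 1)| + |u (x - Pi.single i 1) (y + 1)|)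
          + |u x (y + 2)| + |u x y| := by linarith
      _ ≤ ∑ _i : Fin (d - 1), (layerSup L u (y + 1) + layerSup L u (y + 1))
          + layerSup L u (y + 2) + layerSup L u y := by gcongr <;> apply hle
      _ = _ := by simp [Nat.cast_sub hd]; ring
  have : layerSup L u (y + 1) ≤ R := layerSup_le hpt hR
  rw [le_div_iff₀ hd_pos] at this
  linarith

theorem antitone_layerPowSum (hd : 1 ≤ d) (hL : 1 ≤ L) (hu : HalfHarm d L u) {p : ℝ}
    (hp : 1 ≤ p) : Antitone (layerPowSum L u p) := by
  obtain ⟨B, hB⟩ := hu.1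
  refine antitone_of_two_mul_le_add_of_bddAbove ⟨#(ILpi (d - 1) L) • B ^ p, ?_⟩
    (hu.two_mul_layerPowSum_le hd hL hp)
  exact Set.forall_mem_range.2 fun y => sum_le_card_nsmul _ _ _ fun x _ =>
    Real.rpow_le_rpow (abs_nonneg _) (hB x y) (by linarith)

theorem antitone_layerSup (hd : 1 ≤ d) (hL : 1 ≤ L) (hu : HalfHarm d L u) :
    Antitone (layerSup L u) := by
  obtain ⟨B, hB⟩ := hu.1
  have hB0 : 0 ≤ B := (abs_nonneg _).trans (hB 0 0)
  refine antitone_of_two_mul_le_add_of_bddAbove ⟨B, ?_⟩ (hu.two_mul_layerSup_le hd hL)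
  exact Set.forall_mem_range.2 fun y => layerSup_le (fun x => hB x y) hB0

end HalfHarm

/-- For every `p ∈ [1,∞)` (sum form) and for `p = ∞` (sup form), the `L^p`
norm of `u` on the layer at height `N` is at most its `L^p` norm on the bottom
layer. -/
theorem halfspace_Lp_contraction
    (d L : ℕ) (hd : 2 ≤ d) (hL : 1 ≤ L)
    (u : (Fin (d-1) → ℤ) → ℕ → ℝ) (hu : HalfHarm d L u) (N : ℕ) :
    (∀ p : ℝ, 1 ≤ p →
      (∑ x ∈ ILpi (d-1) L, |u x N| ^ p) ^ (1/p)
        ≤ (∑ x ∈ ILpi (d-1) L, |u x 0| ^ p) ^ (1/p)) ∧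
    (⨆ x ∈ ILpi (d-1) L, |u x N|) ≤ (⨆ x ∈ ILpi (d-1) L, |u x 0|) := by
  refine ⟨fun p hp => ?_, hu.antitone_layerSup (by omega) hL N.zero_le⟩
  exact Real.rpow_le_rpow (sum_nonneg fun _ _ => by positivity)
    (hu.antitone_layerPowSum (by omega) hL hp N.zero_le) (by positivity)
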